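/- For every β with 0 ≤ β ≤ 1, the only real solution of the mean field equation m = tanh(βm) is m = 0; moreover, for every β with 0 < β ≤ 1, m = 0 is the unique minimizer of the Curie–Weiss free energy F_β on [−1,1]. -/

import Mathlib

open Set

/-- The Curie–Weiss free energy `F_β(m)` (using that `Real.log 0 = 0` in Mathlib, so the
convention `0·log 0 = 0` is automatic). -/
noncomputable def cwFreeEnergy (β m : ℝ) : ℝ :=
  -m ^ 2 / 2 + β⁻¹ *
    (((1 + m) / 2) * Real.log ((1 + m) / 2) + ((1 - m) / 2) * Real.log ((1 - m) / 2))

/-!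
Everything rests on `2x < log (1 + x) - log (1 - x)` for `0 < x < 1`, the first term of the
power series of the right-hand side. In the form `x < artanh x` it gives `|tanh y| < |y|` for
`y ≠ 0`, so a nonzero solution of `m = tanh (β m)` would satisfy `|m| < β |m| ≤ |m|`.

With `H` the binary entropy, `F_β(m) = -m²/2 - β⁻¹ H((1 + m)/2)`. The same inequality says
that `H p + 2 (p - 1/2)²` decreases on `[1/2, 1]`; by the symmetry `H (1 - p) = H p` this gives
`H ((1 + m)/2) + m²/2 < log 2` for `m ≠ 0`, so `F_β(m) - F_β(0) > (β⁻¹ - 1) m²/2 ≥ 0`.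
-/

open Real

lemma two_mul_lt_log_one_add_sub_log_one_sub {x : ℝ} (hx₀ : 0 < x) (hx₁ : x < 1) :
    2 * x < log (1 + x) - log (1 - x) := by
  have hsum := hasSum_log_sub_log_of_abs_lt_one (abs_lt.2 ⟨by linarith, hx₁⟩)
  have hpartial := sum_le_hasSum (Finset.range 2) (fun k _ => by positivity) hsum
  norm_num [Finset.sum_range_succ] at hpartial
  nlinarith [pow_pos hx₀ 3]

lemma lt_artanh {x : ℝ} (hx₀ : 0 < x) (hx₁ : x < 1) : x < artanh x := by
  rw [artanh_eq_half_log ⟨by linarith, hx₁.le⟩, log_div (by linarith) (by linarith)]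
  linarith [two_mul_lt_log_one_add_sub_log_one_sub hx₀ hx₁]

lemma tanh_pos_of_pos {y : ℝ} (hy : 0 < y) : 0 < tanh y := by
  rw [tanh_eq_sinh_div_cosh]
  exact div_pos (sinh_pos_iff.2 hy) (cosh_pos y)

lemma tanh_lt_self {y : ℝ} (hy : 0 < y) : tanh y < y := by
  simpa only [artanh_tanh] using lt_artanh (tanh_pos_of_pos hy) (tanh_lt_one y)

lemma abs_tanh_lt_abs {y : ℝ} (hy : y ≠ 0) : |tanh y| < |y| := by
  wlog hpos : 0 < y generalizing y
  · simpa only [tanh_neg, abs_neg] using this (neg_ne_zero.2 hy) (by grind)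
  rw [abs_of_pos (tanh_pos_of_pos hpos), abs_of_pos hpos]
  exact tanh_lt_self hpos

lemma strictAntiOn_binEntropy_add_two_mul_sq :
    StrictAntiOn (fun p => binEntropy p + 2 * (p - 2⁻¹) ^ 2) (Icc 2⁻¹ 1) := by
  refine strictAntiOn_of_deriv_neg (convex_Icc _ _) (by fun_prop) fun p hp => ?_
  rw [interior_Icc] at hp
  obtain ⟨hp₀, hp₁⟩ := hp
  have hderiv : HasDerivAt (fun p => binEntropy p + 2 * (p - 2⁻¹) ^ 2)
      (log (1 - p) - log p + 4 * (p - 2⁻¹)) p := by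
    refine ((hasDerivAt_binEntropy (by linarith) hp₁.ne).add
      ((((hasDerivAt_id' p).sub_const 2⁻¹).pow 2).const_mul 2)).congr_deriv ?_
    ring
  have hlog := two_mul_lt_log_one_add_sub_log_one_sub (x := 2 * p - 1) (by linarith) (by linarith)
  rw [show 1 + (2 * p - 1) = 2 * p by ring, show 1 - (2 * p - 1) = 2 * (1 - p) by ring,
    log_mul two_ne_zero (by linarith), log_mul two_ne_zero (by linarith)] at hlog
  rw [hderiv.deriv]
  linarith

lemma binEntropy_add_two_mul_sq_lt_log_two {p : ℝ} (hp₀ : 0 ≤ p) (hp₁ : p ≤ 1) (hp : p ≠ 2⁻¹) :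
    binEntropy p + 2 * (p - 2⁻¹) ^ 2 < log 2 := by
  wlog hlt : 2⁻¹ < p generalizing p
  · have h := this (p := 1 - p) (by linarith) (by linarith) (by grind) (by grind)
    rwa [binEntropy_one_sub, show 1 - p - 2⁻¹ = -(p - 2⁻¹) by ring, neg_sq] at h
  simpa using strictAntiOn_binEntropy_add_two_mul_sq ⟨le_rfl, by norm_num⟩ ⟨hlt.le, hp₁⟩ hlt

lemma binEntropy_add_two_mul_sq_le_log_two {p : ℝ} (hp₀ : 0 ≤ p) (hp₁ : p ≤ 1) :
    binEntropy p + 2 * (p - 2⁻¹) ^ 2 ≤ log 2 := by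
  rcases eq_or_ne p 2⁻¹ with rfl | hp
  · simp
  · exact (binEntropy_add_two_mul_sq_lt_log_two hp₀ hp₁ hp).le

lemma cwFreeEnergy_eq (β m : ℝ) :
    cwFreeEnergy β m = -m ^ 2 / 2 - β⁻¹ * binEntropy ((1 + m) / 2) := by
  rw [cwFreeEnergy, binEntropy, log_inv, log_inv, show 1 - (1 + m) / 2 = (1 - m) / 2 by ring]
  ring

/-- For `0 ≤ β ≤ 1` the only real solution of `m = tanh (β m)` is `m = 0`,
and for `0 < β ≤ 1` the point `m = 0` is the unique minimizer of the Curie–Weiss free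
energy `F_β` on `[-1, 1]`. -/
theorem curie_weiss_subcritical :
    (∀ β : ℝ, 0 ≤ β → β ≤ 1 → ∀ m : ℝ, m = Real.tanh (β * m) → m = 0) ∧
    (∀ β : ℝ, 0 < β → β ≤ 1 → ∀ m ∈ Icc (-1 : ℝ) 1,
      cwFreeEnergy β 0 ≤ cwFreeEnergy β m ∧ (m ≠ 0 → cwFreeEnergy β 0 < cwFreeEnergy β m)) := by
  refine ⟨fun β hβ₀ hβ₁ m hm => ?_, fun β hβ₀ hβ₁ m ⟨hm₁, hm₂⟩ => ?_⟩
  · by_contra hm₀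
    rcases hβ₀.eq_or_lt with rfl | hβ
    · simp [hm₀] at hm
    · have h := abs_tanh_lt_abs (mul_ne_zero hβ.ne' hm₀)
      rw [← hm, abs_mul, abs_of_pos hβ] at h
      nlinarith [abs_nonneg m]
  · have hβinv : 1 ≤ β⁻¹ := (one_le_inv₀ hβ₀).2 hβ₁
    have hsq : 2 * ((1 + m) / 2 - 2⁻¹) ^ 2 = m ^ 2 / 2 := by ring
    have hp₀ : 0 ≤ (1 + m) / 2 := by linarith
    have hp₁ : (1 + m) / 2 ≤ 1 := by linarith
    have hH := binEntropy_add_two_mul_sq_le_log_two hp₀ hp₁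
    rw [hsq] at hH
    have hgap : 0 ≤ (β⁻¹ - 1) * (log 2 - binEntropy ((1 + m) / 2)) :=
      mul_nonneg (by linarith) (by nlinarith [sq_nonneg m])
    rw [cwFreeEnergy_eq, cwFreeEnergy_eq, show (1 + 0 : ℝ) / 2 = 2⁻¹ by norm_num,
      binEntropy_two_inv]
    refine ⟨by nlinarith, fun hm₀ => ?_⟩
    have hH' := binEntropy_add_two_mul_sq_lt_log_two hp₀ hp₁ (by contrapose! hm₀; linarith)
    rw [hsq] at hH'
    nlinarith
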